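/- There exists a constant C > 0 (one may take C = 2) such that for all n ∈ ℕ, all k ∈ ℕ with k ≤ n, and any two squares Q_{a,b}, Q_{a',b'} of K_n with centers z and z': if the rotated coordinates u(z) = (2z₁+z₂)/√5 and u(z') lie in a common 4-adic interval [(3/√5)·m·4^{-k}, (3/√5)·(m+1)·4^{-k}] for some integer m, then the orthogonal rotated coordinates satisfy |v(z) − v(z')| ≤ C·4^{-k}, where v(z) = (−z₁+2z₂)/√5. -/
import Mathlib


open MeasureTheory Real Set

noncomputable section

/-- Digit value: `false ↦ 0`, `true ↦ 3`. -/
def dig (b : Bool) : ℝ := if b then 3 else 0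

/-- Left endpoint `x_a = ∑ a_j 4^{-j}` of the interval coded by the word `a ∈ {0,3}^n`. -/
def cantorX {n : ℕ} (a : Fin n → Bool) : ℝ :=
  ∑ j : Fin n, dig (a j) * (4 : ℝ) ^ (-((j : ℕ) + 1) : ℤ)

/-- The `n`-th generation `C_n` of the middle-half Cantor set. -/
def cantorC (n : ℕ) : Set ℝ :=
  ⋃ a : Fin n → Bool, Icc (cantorX a) (cantorX a + (4 : ℝ) ^ (-(n : ℤ)))

/-- The `n`-th generation `K_n = C_n × C_n` of the four-corner Cantor set. -/
def cantorK (n : ℕ) : Set (ℝ × ℝ) := cantorC n ×ˢ cantorC n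

/-- The square `Q_{a,b}` of side `4^{-n}` of the `n`-th generation. -/
def cantorSq {n : ℕ} (a b : Fin n → Bool) : Set (ℝ × ℝ) :=
  Icc (cantorX a) (cantorX a + (4 : ℝ) ^ (-(n : ℤ))) ×ˢ
    Icc (cantorX b) (cantorX b + (4 : ℝ) ^ (-(n : ℤ)))

/-- Orthogonal projection in direction `θ`: `proj_θ (x, y) = x cos θ + y sin θ`. -/
def projAngle (θ : ℝ) (p : ℝ × ℝ) : ℝ := p.1 * Real.cos θ + p.2 * Real.sin θ

/-- The Favard length of a planar set. -/
def favard (E : Set (ℝ × ℝ)) : ℝ :=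
  (1 / π) * ∫ θ in (0 : ℝ)..π, (volume (projAngle θ '' E)).toReal

end

noncomputable section

/-- The center of the square `Q_{a,b}`. -/
def sqCenter {n : ℕ} (a b : Fin n → Bool) : ℝ × ℝ :=
  (cantorX a + (4 : ℝ) ^ (-(n : ℤ)) / 2, cantorX b + (4 : ℝ) ^ (-(n : ℤ)) / 2)

/-- Coordinate of `z` along the axis rotated by `α = arctan(1/2)`. -/
def uCoord (z : ℝ × ℝ) : ℝ := (2 * z.1 + z.2) / Real.sqrt 5

/-- Coordinate of `z` along the axis orthogonal to the one rotated by `α = arctan(1/2)`. -/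
def vCoord (z : ℝ × ℝ) : ℝ := (-z.1 + 2 * z.2) / Real.sqrt 5

end

namespace VAux
open Finset

/-- Combined digit `2â + b̂ ∈ {0,1,2,3}` of a pair of boolean digits. -/
def d4 (x y : Bool) : ℕ := 2 * (cond x 1 0) + cond y 1 0

lemma d4_lt (x y : Bool) : d4 x y < 4 := by cases x <;> cases y <;> decide

lemma d4_inj {x y x' y' : Bool} (h : d4 x y = d4 x' y') : x = x' ∧ y = y' := by
  revert h; cases x <;> cases y <;> cases x' <;> cases y' <;> decide

lemma geo3 (t : ℕ) : 3 * ∑ i ∈ range t, 4 ^ i + 1 = 4 ^ t := by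
  induction t with
  | zero => simp
  | succ t ih =>
    rw [sum_range_succ, pow_succ]
    omega

lemma digit_inj : ∀ (k : ℕ) (f g : ℕ → ℕ), (∀ j, f j < 4) → (∀ j, g j < 4) →
    (∑ j ∈ range k, f j * 4 ^ (k - 1 - j)) = (∑ j ∈ range k, g j * 4 ^ (k - 1 - j)) →
    ∀ j < k, f j = g j := by
  intro k
  induction k with
  | zero => intro f g _ _ _ j hj; omega
  | succ k ih =>
    intro f g hf hg h j hj
    rw [sum_range_succ, sum_range_succ] at h
    have e1 : ∀ j ∈ range k, f j * 4 ^ (k + 1 - 1 - j) = f j * 4 ^ (k - 1 - j) * 4 := by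
      intro j hj; rw [Finset.mem_range] at hj
      rw [mul_assoc, ← pow_succ]; congr 2; omega
    have e2 : ∀ j ∈ range k, g j * 4 ^ (k + 1 - 1 - j) = g j * 4 ^ (k - 1 - j) * 4 := by
      intro j hj; rw [Finset.mem_range] at hj
      rw [mul_assoc, ← pow_succ]; congr 2; omega
    rw [sum_congr rfl e1, sum_congr rfl e2, ← sum_mul, ← sum_mul] at h
    simp only [Nat.add_sub_cancel, Nat.sub_self, pow_zero, mul_one] at h
    have hfk := hf k; have hgk := hg k
    have hkey : (∑ j ∈ range k, f j * 4 ^ (k - 1 - j)) = (∑ j ∈ range k, g j * 4 ^ (k - 1 - j))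
        ∧ f k = g k := by omega
    rcases Nat.lt_succ_iff_lt_or_eq.1 hj with hj' | rfl
    · exact ih f g hf hg hkey.1 j hj'
    · exact hkey.2

lemma split (n k : ℕ) (hk : k ≤ n) (f : ℕ → ℕ) :
    ∑ j ∈ range n, f j * 4 ^ (n - 1 - j) =
      (∑ j ∈ range k, f j * 4 ^ (k - 1 - j)) * 4 ^ (n - k) +
        ∑ j ∈ Ico k n, f j * 4 ^ (n - 1 - j) := by
  rw [range_eq_Ico, ← Finset.sum_Ico_consecutive _ (Nat.zero_le k) hk, ← range_eq_Ico, sum_mul]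
  congr 1
  refine sum_congr rfl fun j hj => ?_
  rw [Finset.mem_range] at hj
  rw [mul_assoc, ← pow_add]
  congr 2
  omega

lemma rem_lt (n k : ℕ) (hk : k ≤ n) (f : ℕ → ℕ) (hf : ∀ j, f j < 4) :
    ∑ j ∈ Ico k n, f j * 4 ^ (n - 1 - j) < 4 ^ (n - k) := by
  have h1 : ∑ j ∈ Ico k n, f j * 4 ^ (n - 1 - j) ≤ ∑ j ∈ Ico k n, 3 * 4 ^ (n - 1 - j) :=
    sum_le_sum fun j _ => Nat.mul_le_mul_right _ (by have := hf j; omega)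
  have h2 : ∑ j ∈ Ico k n, 3 * 4 ^ (n - 1 - j) = 3 * ∑ i ∈ range (n - k), 4 ^ i := by
    rw [Finset.sum_Ico_eq_sum_range, ← mul_sum]
    congr 1
    rw [← Finset.sum_range_reflect (fun i => (4:ℕ) ^ i) (n - k)]
    refine sum_congr rfl fun i hi => ?_
    rw [Finset.mem_range] at hi
    congr 1
    omega
  have := geo3 (n - k)
  omega

noncomputable section

/-- The base-4 digit sequence of the pair of words `(a, b)`. -/
def Fd (n : ℕ) (a b : Fin n → Bool) : ℕ → ℕ :=
  fun j => if h : j < n then d4 (a ⟨j, h⟩) (b ⟨j, h⟩) else 0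

/-- The integer `M` with `2 x_a + x_b = 3 M 4^{-n}`. -/
def Mnat (n : ℕ) (a b : Fin n → Bool) : ℕ :=
  ∑ j ∈ range n, Fd n a b j * 4 ^ (n - 1 - j)

lemma two_dig_add (x y : Bool) : 2 * dig x + dig y = 3 * (d4 x y : ℝ) := by
  cases x <;> cases y <;> simp [dig, d4] <;> norm_num

lemma zpow_shift {n j : ℕ} (hj : j < n) :
    (4 : ℝ) ^ (-((j : ℕ) + 1) : ℤ) = (4 : ℝ) ^ ((n - 1 - j : ℕ)) * (4 : ℝ) ^ (-(n : ℤ)) := by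
  rw [← zpow_natCast (4:ℝ) (n - 1 - j), ← zpow_add₀ (by norm_num : (4:ℝ) ≠ 0)]
  congr 1
  omega

lemma key_real (n : ℕ) (a b : Fin n → Bool) :
    2 * cantorX a + cantorX b = 3 * ((Mnat n a b : ℝ)) * (4 : ℝ) ^ (-(n : ℤ)) := by
  unfold cantorX Mnat
  rw [mul_sum, ← sum_add_distrib]
  have step : ∀ j : Fin n,
      2 * (dig (a j) * (4 : ℝ) ^ (-((j : ℕ) + 1) : ℤ)) + dig (b j) * (4 : ℝ) ^ (-((j : ℕ) + 1) : ℤ)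
        = (fun i : ℕ => 3 * (Fd n a b i : ℝ) * (4 : ℝ) ^ ((n - 1 - i : ℕ)) * (4 : ℝ) ^ (-(n : ℤ))) (j : ℕ) := by
    intro j
    simp only [Fd, j.isLt, dif_pos, Fin.eta]
    rw [zpow_shift j.isLt]
    linear_combination ((4:ℝ) ^ ((n - 1 - (j:ℕ) : ℕ)) * (4:ℝ) ^ (-(n:ℤ))) * two_dig_add (a j) (b j)
  rw [sum_congr rfl (fun j _ => step j),
    Fin.sum_univ_eq_sum_range (fun i : ℕ => 3 * (Fd n a b i : ℝ) * (4 : ℝ) ^ ((n - 1 - i : ℕ)) * (4 : ℝ) ^ (-(n : ℤ))) n]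
  push_cast
  rw [Finset.mul_sum, Finset.sum_mul]
  exact sum_congr rfl fun j _ => by ring

lemma u_eq (n : ℕ) (a b : Fin n → Bool) :
    uCoord (sqCenter a b) =
      3 / Real.sqrt 5 * (((Mnat n a b : ℝ) + 1 / 2) * (4 : ℝ) ^ (-(n : ℤ))) := by
  unfold uCoord sqCenter
  simp only
  rw [show 2 * (cantorX a + (4 : ℝ) ^ (-(n : ℤ)) / 2) + (cantorX b + (4 : ℝ) ^ (-(n : ℤ)) / 2)
      = 3 * (((Mnat n a b : ℝ) + 1 / 2) * (4 : ℝ) ^ (-(n : ℤ))) from by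
    linear_combination key_real n a b]
  ring

lemma tail_sum (k : ℕ) : ∀ n : ℕ,
    ∑ j ∈ range n, (if j < k then 0 else 3 * (4 : ℝ) ^ (-((j : ℕ) + 1) : ℤ))
      ≤ (4 : ℝ) ^ (-(k : ℤ)) - (4 : ℝ) ^ (-((max k n : ℕ) : ℤ)) := by
  intro n
  induction n with
  | zero => simp
  | succ n ih =>
    rw [sum_range_succ]
    by_cases hn : n < k
    · have h1 : max k n = k := by omega
      have h2 : max k (n + 1) = k := by omega
      rw [h1] at ih
      rw [h2, if_pos hn]
      linarith
    · have h1 : max k n = n := by omega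
      have h2 : max k (n + 1) = n + 1 := by omega
      rw [h1] at ih
      rw [h2, if_neg hn]
      have hpow : (4 : ℝ) ^ (-(n : ℤ)) = (4 : ℝ) ^ (-((n : ℕ) + 1) : ℤ) * 4 := by
        rw [← zpow_add_one₀ (by norm_num : (4:ℝ) ≠ 0)]
        congr 1
        ring
      have hc : (-(((n:ℕ) + 1 : ℕ) : ℤ)) = (-((n : ℕ) + 1) : ℤ) := by push_cast; ring
      rw [hc]
      linarith

lemma dig_sub_abs (x y : Bool) : |dig x - dig y| ≤ 3 := by
  cases x <;> cases y <;> simp [dig]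

lemma cantorX_close {n : ℕ} (k : ℕ) (a a' : Fin n → Bool)
    (h : ∀ j : Fin n, (j : ℕ) < k → a j = a' j) :
    |cantorX a - cantorX a'| ≤ (4 : ℝ) ^ (-(k : ℤ)) := by
  have hdiff : cantorX a - cantorX a' =
      ∑ j : Fin n, (dig (a j) - dig (a' j)) * (4 : ℝ) ^ (-((j : ℕ) + 1) : ℤ) := by
    unfold cantorX
    rw [← sum_sub_distrib]
    exact sum_congr rfl fun j _ => by ring
  rw [hdiff]
  have hterm : ∀ j : Fin n, |(dig (a j) - dig (a' j)) * (4 : ℝ) ^ (-((j : ℕ) + 1) : ℤ)|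
      ≤ (fun i : ℕ => if i < k then 0 else 3 * (4 : ℝ) ^ (-((i : ℕ) + 1) : ℤ)) (j : ℕ) := by
    intro j
    by_cases hj : (j : ℕ) < k
    · simp [hj, h j hj]
    · simp only [hj, if_false]
      rw [abs_mul, abs_of_nonneg (by positivity : (0:ℝ) ≤ (4 : ℝ) ^ (-((j : ℕ) + 1) : ℤ))]
      exact mul_le_mul_of_nonneg_right (dig_sub_abs _ _) (by positivity)
  calc |∑ j : Fin n, (dig (a j) - dig (a' j)) * (4 : ℝ) ^ (-((j : ℕ) + 1) : ℤ)|
      ≤ ∑ j : Fin n, |(dig (a j) - dig (a' j)) * (4 : ℝ) ^ (-((j : ℕ) + 1) : ℤ)| :=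
        Finset.abs_sum_le_sum_abs _ _
    _ ≤ ∑ j : Fin n, (fun i : ℕ => if i < k then 0 else 3 * (4 : ℝ) ^ (-((i : ℕ) + 1) : ℤ)) (j : ℕ) :=
        sum_le_sum fun j _ => hterm j
    _ = ∑ j ∈ range n, (fun i : ℕ => if i < k then 0 else 3 * (4 : ℝ) ^ (-((i : ℕ) + 1) : ℤ)) j :=
        Fin.sum_univ_eq_sum_range (fun i : ℕ => if i < k then 0 else 3 * (4 : ℝ) ^ (-((i : ℕ) + 1) : ℤ)) n
    _ ≤ (4 : ℝ) ^ (-(k : ℤ)) - (4 : ℝ) ^ (-((max k n : ℕ) : ℤ)) := tail_sum k n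
    _ ≤ (4 : ℝ) ^ (-(k : ℤ)) := by
        have : (0:ℝ) ≤ (4 : ℝ) ^ (-((max k n : ℕ) : ℤ)) := by positivity
        linarith

end
end VAux

/-- There exists `C > 0` (one may take `C = 2`) such that for all `n`, all `k ≤ n`, and any
two squares of `K_n` with centers `z, z'`: if `u(z)` and `u(z')` lie in a common 4-adic
interval `[(3/√5)·m·4^{-k}, (3/√5)·(m+1)·4^{-k}]`, then `|v(z) − v(z')| ≤ C·4^{-k}`. -/
theorem vCoord_close_of_common_fourAdic : ∃ C : ℝ, 0 < C ∧
    ∀ n k : ℕ, k ≤ n → ∀ a b a' b' : Fin n → Bool, ∀ m : ℤ,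
      uCoord (sqCenter a b) ∈
        Icc (3 / Real.sqrt 5 * m * (4 : ℝ) ^ (-(k : ℤ)))
          (3 / Real.sqrt 5 * (m + 1) * (4 : ℝ) ^ (-(k : ℤ))) →
      uCoord (sqCenter a' b') ∈
        Icc (3 / Real.sqrt 5 * m * (4 : ℝ) ^ (-(k : ℤ)))
          (3 / Real.sqrt 5 * (m + 1) * (4 : ℝ) ^ (-(k : ℤ))) →
      |vCoord (sqCenter a b) - vCoord (sqCenter a' b')| ≤ C * (4 : ℝ) ^ (-(k : ℤ)) := by
  classical
  refine ⟨2, by norm_num, ?_⟩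
  intro n k hk a b a' b' m h1 h2
  open VAux Finset in
  -- the cast of `4^(n-k)` and its relation to `4^{-k}`
  have hEr : ((4 ^ (n - k) : ℕ) : ℝ) * (4 : ℝ) ^ (-(n : ℤ)) = (4 : ℝ) ^ (-(k : ℤ)) := by
    push_cast
    rw [← zpow_natCast (4:ℝ) (n - k), ← zpow_add₀ (by norm_num : (4:ℝ) ≠ 0)]
    congr 1
    omega
  -- membership implies integer bounds on Mnat
  have key : ∀ c d : Fin n → Bool,
      uCoord (sqCenter c d) ∈
        Icc (3 / Real.sqrt 5 * m * (4 : ℝ) ^ (-(k : ℤ)))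
          (3 / Real.sqrt 5 * (m + 1) * (4 : ℝ) ^ (-(k : ℤ))) →
      m * ((4 ^ (n - k) : ℕ) : ℤ) ≤ (Mnat n c d : ℤ) ∧
        (Mnat n c d : ℤ) < (m + 1) * ((4 ^ (n - k) : ℕ) : ℤ) := by
    intro c d hcd
    obtain ⟨hl, hr⟩ := hcd
    rw [u_eq] at hl hr
    have hpos : (0:ℝ) < 3 / Real.sqrt 5 * (4 : ℝ) ^ (-(n : ℤ)) := by positivity
    have l1 : (m : ℝ) * ((4 ^ (n - k) : ℕ) : ℝ) ≤ (Mnat n c d : ℝ) + 1 / 2 := by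
      have h' : 3 / Real.sqrt 5 * (4 : ℝ) ^ (-(n : ℤ)) * ((m : ℝ) * ((4 ^ (n - k) : ℕ) : ℝ))
          ≤ 3 / Real.sqrt 5 * (4 : ℝ) ^ (-(n : ℤ)) * ((Mnat n c d : ℝ) + 1 / 2) := by
        calc 3 / Real.sqrt 5 * (4 : ℝ) ^ (-(n : ℤ)) * ((m : ℝ) * ((4 ^ (n - k) : ℕ) : ℝ))
            = 3 / Real.sqrt 5 * (m : ℝ) * (((4 ^ (n - k) : ℕ) : ℝ) * (4 : ℝ) ^ (-(n : ℤ))) := by ring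
          _ = 3 / Real.sqrt 5 * (m : ℝ) * (4 : ℝ) ^ (-(k : ℤ)) := by rw [hEr]
          _ ≤ 3 / Real.sqrt 5 * (((Mnat n c d : ℝ) + 1 / 2) * (4 : ℝ) ^ (-(n : ℤ))) := hl
          _ = 3 / Real.sqrt 5 * (4 : ℝ) ^ (-(n : ℤ)) * ((Mnat n c d : ℝ) + 1 / 2) := by ring
      exact le_of_mul_le_mul_left h' hpos
    have l2 : (Mnat n c d : ℝ) + 1 / 2 ≤ ((m : ℝ) + 1) * ((4 ^ (n - k) : ℕ) : ℝ) := by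
      have h' : 3 / Real.sqrt 5 * (4 : ℝ) ^ (-(n : ℤ)) * ((Mnat n c d : ℝ) + 1 / 2)
          ≤ 3 / Real.sqrt 5 * (4 : ℝ) ^ (-(n : ℤ)) * (((m : ℝ) + 1) * ((4 ^ (n - k) : ℕ) : ℝ)) := by
        calc 3 / Real.sqrt 5 * (4 : ℝ) ^ (-(n : ℤ)) * ((Mnat n c d : ℝ) + 1 / 2)
            = 3 / Real.sqrt 5 * (((Mnat n c d : ℝ) + 1 / 2) * (4 : ℝ) ^ (-(n : ℤ))) := by ring
          _ ≤ 3 / Real.sqrt 5 * ((m : ℝ) + 1) * (4 : ℝ) ^ (-(k : ℤ)) := hr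
          _ = 3 / Real.sqrt 5 * ((m : ℝ) + 1) * (((4 ^ (n - k) : ℕ) : ℝ) * (4 : ℝ) ^ (-(n : ℤ))) := by
              rw [hEr]
          _ = 3 / Real.sqrt 5 * (4 : ℝ) ^ (-(n : ℤ)) * (((m : ℝ) + 1) * ((4 ^ (n - k) : ℕ) : ℝ)) := by
              ring
      exact le_of_mul_le_mul_left h' hpos
    constructor
    · have hc : ((m * ((4 ^ (n - k) : ℕ) : ℤ) : ℤ) : ℝ) < ((Mnat n c d : ℤ) : ℝ) + 1 := by
        push_cast
        push_cast at l1
        linarith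
      exact Int.lt_add_one_iff.mp (by exact_mod_cast hc)
    · have hc : ((Mnat n c d : ℤ) : ℝ) < (((m + 1) * ((4 ^ (n - k) : ℕ) : ℤ) : ℤ) : ℝ) := by
        push_cast
        push_cast at l2
        linarith
      exact_mod_cast hc
  obtain ⟨k1, k2⟩ := key a b h1
  obtain ⟨k1', k2'⟩ := key a' b' h2
  have hF : ∀ (c d : Fin n → Bool) (j : ℕ), Fd n c d j < 4 := by
    intro c d j
    unfold Fd
    split
    · exact d4_lt _ _
    · norm_num
  have hEpos : (0:ℤ) < ((4 ^ (n - k) : ℕ) : ℤ) := by positivity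
  -- the quotient `Hi` is determined by `m`
  have hq : ∀ c d : Fin n → Bool,
      m * ((4 ^ (n - k) : ℕ) : ℤ) ≤ (Mnat n c d : ℤ) →
      (Mnat n c d : ℤ) < (m + 1) * ((4 ^ (n - k) : ℕ) : ℤ) →
      ((∑ j ∈ range k, Fd n c d j * 4 ^ (k - 1 - j) : ℕ) : ℤ) = m := by
    intro c d hm1 hm2
    have hsp := split n k hk (Fd n c d)
    have hrm := rem_lt n k hk (Fd n c d) (hF c d)
    set Hi : ℕ := ∑ j ∈ range k, Fd n c d j * 4 ^ (k - 1 - j) with hHidef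
    set R : ℕ := ∑ j ∈ Ico k n, Fd n c d j * 4 ^ (n - 1 - j) with hRdef
    have e1 : (Mnat n c d : ℤ) = (Hi : ℤ) * ((4 ^ (n - k) : ℕ) : ℤ) + (R : ℤ) := by
      unfold Mnat
      rw [hsp]
      push_cast
      ring
    have hR1 : (R : ℤ) < ((4 ^ (n - k) : ℕ) : ℤ) := by exact_mod_cast hrm
    have hR0 : (0:ℤ) ≤ (R : ℤ) := by positivity
    have a1 : m * ((4 ^ (n - k) : ℕ) : ℤ) < ((Hi : ℤ) + 1) * ((4 ^ (n - k) : ℕ) : ℤ) := by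
      have : m * ((4 ^ (n - k) : ℕ) : ℤ) ≤ (Hi : ℤ) * ((4 ^ (n - k) : ℕ) : ℤ) + (R : ℤ) := by
        rw [← e1]; exact hm1
      nlinarith
    have a2 : (Hi : ℤ) * ((4 ^ (n - k) : ℕ) : ℤ) < (m + 1) * ((4 ^ (n - k) : ℕ) : ℤ) := by
      have : (Hi : ℤ) * ((4 ^ (n - k) : ℕ) : ℤ) + (R : ℤ) < (m + 1) * ((4 ^ (n - k) : ℕ) : ℤ) := by
        rw [← e1]; exact hm2
      nlinarith
    have b1 := lt_of_mul_lt_mul_right a1 (le_of_lt hEpos)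
    have b2 := lt_of_mul_lt_mul_right a2 (le_of_lt hEpos)
    omega
  have hHiEq : (∑ j ∈ range k, Fd n a b j * 4 ^ (k - 1 - j))
      = ∑ j ∈ range k, Fd n a' b' j * 4 ^ (k - 1 - j) := by
    have := (hq a b k1 k2).trans (hq a' b' k1' k2').symm
    exact_mod_cast this
  have hdig := digit_inj k (Fd n a b) (Fd n a' b') (hF a b) (hF a' b') hHiEq
  have hj : ∀ j : Fin n, (j : ℕ) < k → a j = a' j ∧ b j = b' j := by
    intro j hjk
    have h := hdig (j : ℕ) hjk
    unfold Fd at h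
    rw [dif_pos j.isLt, dif_pos j.isLt] at h
    simp only [Fin.eta] at h
    exact d4_inj h
  have hA := cantorX_close k a a' fun j h => (hj j h).1
  have hB := cantorX_close k b b' fun j h => (hj j h).2
  -- conclude
  have hvdiff : vCoord (sqCenter a b) - vCoord (sqCenter a' b') =
      (-(cantorX a - cantorX a') + 2 * (cantorX b - cantorX b')) / Real.sqrt 5 := by
    unfold vCoord sqCenter
    simp only
    ring
  rw [hvdiff]
  have hk4 : (0:ℝ) < (4 : ℝ) ^ (-(k : ℤ)) := by positivity
  have hs2 : (2:ℝ) ≤ Real.sqrt 5 := by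
    nlinarith [Real.sq_sqrt (by norm_num : (0:ℝ) ≤ 5), Real.sqrt_nonneg 5]
  have habs : |(-(cantorX a - cantorX a') + 2 * (cantorX b - cantorX b'))|
      ≤ 3 * (4 : ℝ) ^ (-(k : ℤ)) := by
    calc |(-(cantorX a - cantorX a') + 2 * (cantorX b - cantorX b'))|
        ≤ |(-(cantorX a - cantorX a'))| + |2 * (cantorX b - cantorX b')| := abs_add_le _ _
      _ = |cantorX a - cantorX a'| + 2 * |cantorX b - cantorX b'| := by
          rw [abs_neg, abs_mul]
          norm_num
      _ ≤ 3 * (4 : ℝ) ^ (-(k : ℤ)) := by linarith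
  rw [abs_div, abs_of_nonneg (Real.sqrt_nonneg 5)]
  rw [div_le_iff₀ (by positivity : (0:ℝ) < Real.sqrt 5)]
  have hmul : (4 : ℝ) ^ (-(k : ℤ)) * 2 ≤ (4 : ℝ) ^ (-(k : ℤ)) * Real.sqrt 5 :=
    mul_le_mul_of_nonneg_left hs2 hk4.le
  linarith
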